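/- arXiv:1105.2874 — 7 statements merged into one kernel-verified Lean document; each statement's English description precedes it below -/
import Mathlib

section
/- A graph that is hole-free, paraglider-free, and contains no induced complement of C6 is weakly chordal. -/
open SimpleGraph

/-- `H` occurs as an induced subgraph of `G`. -/
def HasInducedCopy {V W : Type} (G : SimpleGraph V) (H : SimpleGraph W) : Prop :=
  Nonempty (H ↪g G)

/-- `G` has no induced chordless cycle with at least 5 vertices. -/
def HoleFree {V : Type} (G : SimpleGraph V) : Prop :=
  ∀ n : ℕ, 5 ≤ n → ¬ HasInducedCopy G (cycleGraph n)

/-- the disjoint union of a `P₂` and a `P₃`. -/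
def p2p3 : SimpleGraph (Fin 5) :=
  SimpleGraph.fromRel (fun i j => (i, j) ∈ ([(0,1),(2,3),(3,4)] : List (Fin 5 × Fin 5)))

/-- the paraglider: a diamond on `0,1,2,3` (missing edge `2-3`) plus vertex `4` seeing `2,3`. -/
def paraglider : SimpleGraph (Fin 5) :=
  SimpleGraph.fromRel
    (fun i j => (i, j) ∈ ([(0,1),(0,2),(0,3),(1,2),(1,3),(4,2),(4,3)] : List (Fin 5 × Fin 5)))

/-- the diamond `K₄ - e`. -/
def diamond : SimpleGraph (Fin 4) :=
  SimpleGraph.fromRel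
    (fun i j => (i, j) ∈ ([(0,1),(0,2),(0,3),(1,2),(1,3)] : List (Fin 4 × Fin 4)))

/-- three independent edges. -/
def threeK2 : SimpleGraph (Fin 6) :=
  SimpleGraph.fromRel (fun i j => (i, j) ∈ ([(0,1),(2,3),(4,5)] : List (Fin 6 × Fin 6)))

/-- the matched co-bipartite graph: two cliques of size `k` joined by a perfect matching. -/
def matchedCoBip (k : ℕ) : SimpleGraph (Fin k ⊕ Fin k) :=
  SimpleGraph.fromRel (fun x y =>
    (∃ i j, x = Sum.inl i ∧ y = Sum.inl j) ∨ (∃ i j, x = Sum.inr i ∧ y = Sum.inr j) ∨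
    (∃ i, x = Sum.inl i ∧ y = Sum.inr i))

/-- `G` has no induced hole and no induced antihole. -/
def WeaklyChordal {V : Type} (G : SimpleGraph V) : Prop :=
  ∀ n : ℕ, 5 ≤ n →
    ¬ HasInducedCopy G (cycleGraph n) ∧ ¬ HasInducedCopy G (cycleGraph n)ᶜ

/-- a clique `K` whose removal disconnects the graph. -/
def HasCliqueSeparator {V : Type} (G : SimpleGraph V) : Prop :=
  ∃ K : Set V, G.IsClique K ∧ ¬ (G.induce Kᶜ).Preconnected

/-- an atom: a connected graph with no clique separator. -/
def IsAtomGraph {V : Type} (G : SimpleGraph V) : Prop :=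
  G.Connected ∧ ¬ HasCliqueSeparator G

/-! Holes are excluded by hypothesis, so only antiholes matter. The antihole on five vertices is the
hole `C₅`, the one on six vertices is excluded directly, and from seven vertices on the complement of
`Cₙ` contains an induced paraglider, because `Cₙ` contains an induced `P₂ ∪ P₃`. -/

lemma HasInducedCopy.trans {U V W : Type} {G : SimpleGraph V} {H : SimpleGraph W}
    {K : SimpleGraph U} (hGH : HasInducedCopy G H) (hHK : HasInducedCopy H K) :
    HasInducedCopy G K :=
  let ⟨e⟩ := hGH; let ⟨f⟩ := hHK; ⟨e.comp f⟩

lemma sub_add_mod_eq_one_iff {n a b : ℕ} (hn : 2 ≤ n) (ha : a < n) (hb : b < n) :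
    (n - b + a) % n = 1 ↔ a = b + 1 ∨ (a = 0 ∧ b = n - 1) := by
  rcases Nat.lt_or_ge (n - b + a) n with hlt | hge
  · rw [Nat.mod_eq_of_lt hlt]; omega
  · rw [Nat.mod_eq_sub_mod hge, Nat.mod_eq_of_lt (by omega)]; omega

lemma cycleGraph_adj_mk_iff {n a b : ℕ} (hn : 2 ≤ n) (ha : a < n) (hb : b < n) :
    (cycleGraph n).Adj ⟨a, ha⟩ ⟨b, hb⟩ ↔
      a = b + 1 ∨ b = a + 1 ∨ (a = 0 ∧ b = n - 1) ∨ (b = 0 ∧ a = n - 1) := by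
  rw [cycleGraph_adj', Fin.sub_def, Fin.sub_def, sub_add_mod_eq_one_iff hn ha hb,
    sub_add_mod_eq_one_iff hn hb ha]
  tauto

lemma hasInducedCopy_compl_cycleGraph_five : HasInducedCopy (cycleGraph 5)ᶜ (cycleGraph 5) :=
  ⟨{ toFun := ![0, 2, 4, 1, 3]
     inj' := by decide
     map_rel_iff' := by decide }⟩

/-- In `Cₙ` the vertices `3, 5, 0, 1, 4` induce the `P₂ ∪ P₃` formed by the edge `0-1` and the
path `3-4-5`, whose complement is the paraglider. -/
lemma hasInducedCopy_compl_cycleGraph_paraglider {n : ℕ} (hn : 7 ≤ n) :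
    HasInducedCopy (cycleGraph n)ᶜ paraglider := by
  let f : Fin 5 → Fin n :=
    ![⟨3, by omega⟩, ⟨5, by omega⟩, ⟨0, by omega⟩, ⟨1, by omega⟩, ⟨4, by omega⟩]
  refine ⟨{ toFun := f, inj' := ?_, map_rel_iff' := ?_ }⟩
  · intro i j h
    fin_cases i <;> fin_cases j <;> simp_all [f, Fin.ext_iff]
  · intro i j
    change (cycleGraph n)ᶜ.Adj (f i) (f j) ↔ _
    simp only [compl_adj, ne_eq, Fin.ext_iff]
    fin_cases i <;> fin_cases j <;>
      simp [f, cycleGraph_adj_mk_iff (by omega : 2 ≤ n), paraglider] <;> omega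

/-- a hole-, paraglider- and `C₆`-complement-free graph is weakly chordal. -/
theorem hp_coC6_free_weakly_chordal {V : Type} (G : SimpleGraph V)
    (hHole : HoleFree G) (hPara : ¬ HasInducedCopy G paraglider)
    (hCoC6 : ¬ HasInducedCopy G (cycleGraph 6)ᶜ) :
    WeaklyChordal G := by
  refine fun n hn => ⟨hHole n hn, fun hAnti => ?_⟩
  rcases Nat.lt_or_ge n 7 with h7 | h7
  · interval_cases n
    · exact hHole 5 le_rfl (hAnti.trans hasInducedCopy_compl_cycleGraph_five)
    · exact hCoC6 hAnti
  · exact hPara (hAnti.trans (hasInducedCopy_compl_cycleGraph_paraglider h7))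
end

section
/- Let A be a graph isomorphic to the complement of C6 (i.e., two disjoint triangles joined by a perfect matching). For any two nonadjacent vertices x, y of A, there exist vertices a, b, c, d of A such that (x,a,b,y) is an induced P4, (x,c,y) and (x,d,y) are induced P3's, and (c,a,b,d) is an induced P4 in A. -/
open SimpleGraph

private instance : DecidableRel (SimpleGraph.cycleGraph 6)ᶜ.Adj :=
  fun _ _ => inferInstanceAs (Decidable (_ ∧ _))

private lemma coC6_key : ∀ x y : Fin 6, x ≠ y → ¬ (cycleGraph 6)ᶜ.Adj x y →
    ∃ a b c d : Fin 6,
      List.Pairwise (· ≠ ·) [x, a, b, y, c, d] ∧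
      (cycleGraph 6)ᶜ.Adj x a ∧ (cycleGraph 6)ᶜ.Adj a b ∧ (cycleGraph 6)ᶜ.Adj b y ∧
      ¬ (cycleGraph 6)ᶜ.Adj x b ∧ ¬ (cycleGraph 6)ᶜ.Adj a y ∧
      (cycleGraph 6)ᶜ.Adj x c ∧ (cycleGraph 6)ᶜ.Adj c y ∧ (cycleGraph 6)ᶜ.Adj x d ∧
      (cycleGraph 6)ᶜ.Adj d y ∧
      (cycleGraph 6)ᶜ.Adj c a ∧ (cycleGraph 6)ᶜ.Adj b d ∧ ¬ (cycleGraph 6)ᶜ.Adj c b ∧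
      ¬ (cycleGraph 6)ᶜ.Adj a d ∧ ¬ (cycleGraph 6)ᶜ.Adj c d := by decide

/-- nonadjacent pairs in a `C₆`-complement are endpoints of a `P₄` and two `P₃`'s
forming the described configuration. -/
theorem coC6_nonadjacent_pairs {V : Type} (A : SimpleGraph V)
    (hA : Nonempty (A ≃g (cycleGraph 6)ᶜ)) (x y : V) (hne : x ≠ y) (hnadj : ¬ A.Adj x y) :
    ∃ a b c d : V,
      List.Pairwise (· ≠ ·) [x, a, b, y, c, d] ∧
      -- (x,a,b,y) is an induced P₄
      A.Adj x a ∧ A.Adj a b ∧ A.Adj b y ∧ ¬ A.Adj x b ∧ ¬ A.Adj a y ∧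
      -- (x,c,y) and (x,d,y) are induced P₃'s
      A.Adj x c ∧ A.Adj c y ∧ A.Adj x d ∧ A.Adj d y ∧
      -- (c,a,b,d) is an induced P₄
      A.Adj c a ∧ A.Adj b d ∧ ¬ A.Adj c b ∧ ¬ A.Adj a d ∧ ¬ A.Adj c d := by
  obtain ⟨e⟩ := hA
  have hne' : e x ≠ e y := fun h => hne (e.injective h)
  have hnadj' : ¬ (cycleGraph 6)ᶜ.Adj (e x) (e y) := fun h => hnadj ((e.map_adj_iff).mp h)
  obtain ⟨a, b, c, d, hpw, h1, h2, h3, h4, h5, h6, h7, h8, h9, h10, h11, h12, h13, h14⟩ :=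
    coC6_key (e x) (e y) hne' hnadj'
  have hadj : ∀ u v : Fin 6, (cycleGraph 6)ᶜ.Adj u v → A.Adj (e.symm u) (e.symm v) := by
    intro u v h
    have := e.symm.map_adj_iff.mpr h
    exact this
  have hnadjb : ∀ u v : Fin 6, ¬ (cycleGraph 6)ᶜ.Adj u v → ¬ A.Adj (e.symm u) (e.symm v) := by
    intro u v h hc
    exact h (e.symm.map_adj_iff.mp hc)
  refine ⟨e.symm a, e.symm b, e.symm c, e.symm d, ?_, ?_, ?_, ?_, ?_, ?_, ?_, ?_, ?_, ?_,
    ?_, ?_, ?_, ?_, ?_⟩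
  · have hx : e.symm (e x) = x := e.symm_apply_apply x
    have hy : e.symm (e y) = y := e.symm_apply_apply y
    have : List.Pairwise (· ≠ ·) ([e x, a, b, e y, c, d].map e.symm) := by
      refine List.Pairwise.map _ ?_ hpw
      intro u v huv h
      exact huv (e.symm.injective h)
    simpa [hx, hy] using this
  · simpa using hadj _ _ h1
  · simpa using hadj _ _ h2
  · simpa using hadj _ _ h3
  · simpa using hnadjb _ _ h4
  · simpa using hnadjb _ _ h5
  · simpa using hadj _ _ h6
  · simpa using hadj _ _ h7
  · simpa using hadj _ _ h8
  · simpa using hadj _ _ h9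
  · simpa using hadj _ _ h10
  · simpa using hadj _ _ h11
  · simpa using hnadjb _ _ h12
  · simpa using hnadjb _ _ h13
  · simpa using hnadjb _ _ h14
end

section
/- Let G be a hole-free and paraglider-free graph and A an induced subgraph of G isomorphic to the complement of C6. If a vertex x outside A has exactly two neighbors in A, then these two neighbors are adjacent in A. -/
open SimpleGraph

lemma hole5_aux {V : Type} {G : SimpleGraph V} (hHole : HoleFree G)
    (f : (cycleGraph 6)ᶜ ↪g G) (x : V) (hx : x ∉ Set.range ⇑f)
    (i : Fin 6) (h1 : G.Adj x (f i)) (h2 : G.Adj x (f (i+1)))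
    (hno : ∀ k : Fin 6, G.Adj x (f k) → k = i ∨ k = i + 1) : False := by
  have hfx : ∀ k : Fin 6, x ≠ f k := fun k h => hx ⟨k, h.symm⟩
  have hI : ∀ m : Fin 6, m ≠ m+2 ∧ m ≠ m+5 ∧ m ≠ m+1 ∧ m+2 ≠ m+5 ∧ m+2 ≠ m+1 ∧ m+5 ≠ m+1 := by
    decide
  obtain ⟨d12, d13, d14, d23, d24, d34⟩ := hI i
  have hC : ∀ m : Fin 6, ((cycleGraph 6)ᶜ).Adj m (m+2) ∧ ((cycleGraph 6)ᶜ).Adj (m+2) (m+5) ∧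
      ((cycleGraph 6)ᶜ).Adj (m+5) (m+1) ∧ ¬ ((cycleGraph 6)ᶜ).Adj m (m+5) ∧
      ¬ ((cycleGraph 6)ᶜ).Adj m (m+1) ∧ ¬ ((cycleGraph 6)ᶜ).Adj (m+2) (m+1) := by
    decide
  obtain ⟨c12, c23, c34, c13, c14, c24⟩ := hC i
  -- edges
  have e12 : G.Adj (f i) (f (i+2)) := f.map_adj_iff.2 c12
  have e23 : G.Adj (f (i+2)) (f (i+5)) := f.map_adj_iff.2 c23
  have e34 : G.Adj (f (i+5)) (f (i+1)) := f.map_adj_iff.2 c34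
  -- non-edges among f's
  have n13 : ¬ G.Adj (f i) (f (i+5)) := fun h => c13 (f.map_adj_iff.1 h)
  have n14 : ¬ G.Adj (f i) (f (i+1)) := fun h => c14 (f.map_adj_iff.1 h)
  have n24 : ¬ G.Adj (f (i+2)) (f (i+1)) := fun h => c24 (f.map_adj_iff.1 h)
  -- non-edges with x
  have n02 : ¬ G.Adj x (f (i+2)) := fun h => by
    rcases hno _ h with h' | h'
    · exact d12 h'.symm
    · exact d24 h'
  have n03 : ¬ G.Adj x (f (i+5)) := fun h => by
    rcases hno _ h with h' | h'
    · exact d13 h'.symm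
    · exact d34 h'
  -- symmetrized versions
  have e01 := h1; have e10 := h1.symm
  have e40 := h2.symm; have e04 := h2
  have e21 := e12.symm; have e32 := e23.symm; have e43 := e34.symm
  have n31 : ¬ G.Adj (f (i+5)) (f i) := fun h => n13 h.symm
  have n41 : ¬ G.Adj (f (i+1)) (f i) := fun h => n14 h.symm
  have n42 : ¬ G.Adj (f (i+1)) (f (i+2)) := fun h => n24 h.symm
  have n20 : ¬ G.Adj (f (i+2)) x := fun h => n02 h.symm
  have n30 : ¬ G.Adj (f (i+5)) x := fun h => n03 h.symm
  -- distinctness symmetrized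
  have d21 := d12.symm; have d31 := d13.symm; have d41 := d14.symm
  have d32 := d23.symm; have d42 := d24.symm; have d43 := d34.symm
  have finj : ∀ a b : Fin 6, a ≠ b → f a ≠ f b := fun a b h he => h (f.injective he)
  have hfx' : ∀ k : Fin 6, f k ≠ x := fun k => (hfx k).symm
  set v : Fin 5 → V := ![x, f i, f (i+2), f (i+5), f (i+1)] with hv
  apply hHole 5 le_rfl
  refine ⟨⟨⟨v, ?_⟩, ?_⟩⟩
  · intro a b hab
    fin_cases a <;> fin_cases b <;>
      simp only [hv, Matrix.cons_val_zero, Matrix.cons_val_one, Matrix.head_cons,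
        Matrix.cons_val_succ, Fin.mk_zero, Fin.mk_one] at hab ⊢ <;>
      first
        | rfl
        | exact absurd hab (hfx _)
        | exact absurd hab (hfx' _)
        | exact absurd hab (finj _ _ (by assumption))
  · intro a b
    fin_cases a <;> fin_cases b <;>
      simp only [hv, Matrix.cons_val_zero, Matrix.cons_val_one, Matrix.head_cons,
        Matrix.cons_val_succ, Function.Embedding.coeFn_mk] <;>
      first
        | exact iff_of_false (G.irrefl) (by decide)
        | exact iff_of_true (by assumption) (by decide)
        | exact iff_of_false (by assumption) (by decide)

/-- the two `A`-neighbors of a vertex in `A₂` are adjacent. -/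
theorem A2_neighbors_adjacent {V : Type} (G : SimpleGraph V)
    (hHole : HoleFree G) (hPara : ¬ HasInducedCopy G paraglider)
    (f : (cycleGraph 6)ᶜ ↪g G)
    (x : V) (hx : x ∉ Set.range ⇑f)
    (h2 : {i : Fin 6 | G.Adj x (f i)}.ncard = 2) :
    ∀ i j : Fin 6, G.Adj x (f i) → G.Adj x (f j) → i ≠ j → G.Adj (f i) (f j) := by
  intro i j hi hj hij
  by_contra hadj
  have hsub : ({i, j} : Set (Fin 6)) ⊆ {k : Fin 6 | G.Adj x (f k)} := by
    intro k hk
    rcases hk with rfl | hk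
    · exact hi
    · rcases hk with rfl; exact hj
  have hS : ({i, j} : Set (Fin 6)) = {k : Fin 6 | G.Adj x (f k)} :=
    Set.eq_of_subset_of_ncard_le hsub (by rw [h2, Set.ncard_pair hij]) (Set.toFinite _)
  have hno : ∀ k : Fin 6, G.Adj x (f k) → k = i ∨ k = j := by
    intro k hk
    have : k ∈ ({i, j} : Set (Fin 6)) := hS ▸ hk
    simpa using this
  have hcyc : (cycleGraph 6).Adj i j := by
    by_contra hc
    exact hadj (f.map_adj_iff.2 ⟨hij, hc⟩)
  have hor : j = i + 1 ∨ i = j + 1 := by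
    rcases cycleGraph_adj.1 hcyc with h | h
    · right
      have := sub_eq_iff_eq_add.1 h
      rw [this, add_comm]
    · left
      have := sub_eq_iff_eq_add.1 h
      rw [this, add_comm]
  rcases hor with rfl | rfl
  · exact hole5_aux hHole f x hx i hi hj hno
  · exact hole5_aux hHole f x hx j hj hi (fun k hk => (hno k hk).symm)
end

section
/- Let G be a hole-free and paraglider-free graph and A an induced subgraph of G isomorphic to the complement of C6. Then the set A6 of vertices outside A adjacent to all six vertices of A is a clique in G. -/
/-! Two nonadjacent vertices `u, v` of `A₆`, an edge `f 0 f 2` of `A` and the vertex `f 1`,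
which misses both of its ends, induce a paraglider. -/

open SimpleGraph

theorem hasInducedCopy_paraglider {V : Type} {G : SimpleGraph V} {a b c u v : V}
    (hab : G.Adj a b) (hca : c ≠ a) (hcb : c ≠ b) (hac : ¬G.Adj a c) (hbc : ¬G.Adj b c)
    (hua : G.Adj u a) (hub : G.Adj u b) (huc : G.Adj u c)
    (hva : G.Adj v a) (hvb : G.Adj v b) (hvc : G.Adj v c)
    (huv : u ≠ v) (huv' : ¬G.Adj u v) :
    HasInducedCopy G paraglider := by
  refine ⟨⟨⟨![a, b, u, v, c], ?_⟩, fun {i j} => ?_⟩⟩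
  · intro i j hij
    fin_cases i <;> fin_cases j <;>
      simp_all [hab.ne, hua.ne', hub.ne', hva.ne', hvb.ne', huc.ne', hvc.ne', eq_comm]
  · change G.Adj (![a, b, u, v, c] i) (![a, b, u, v, c] j) ↔ _
    fin_cases i <;> fin_cases j <;>
      simp [paraglider, hab, hac, hbc, hua, hub, huc, hva, hvb, hvc, huv', hab.symm, hua.symm,
        hub.symm, huc.symm, hva.symm, hvb.symm, hvc.symm, G.adj_comm c, G.adj_comm v u]

theorem A6_clique_general {V : Type} (G : SimpleGraph V)
    (hPara : ¬ HasInducedCopy G paraglider)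
    (f : (cycleGraph 6)ᶜ ↪g G) :
    G.IsClique {v : V | v ∉ Set.range ⇑f ∧ ∀ i : Fin 6, G.Adj v (f i)} := by
  rintro u ⟨-, hu⟩ v ⟨-, hv⟩ huv
  by_contra huv'
  have hf (i j : Fin 6) : G.Adj (f i) (f j) ↔ (cycleGraph 6)ᶜ.Adj i j := f.map_adj_iff
  refine hPara (hasInducedCopy_paraglider (a := f 0) (b := f 2) (c := f 1) ?_ ?_ ?_ ?_ ?_
    (hu 0) (hu 2) (hu 1) (hv 0) (hv 2) (hv 1) huv huv')
  · exact (hf 0 2).2 (by decide)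
  · exact f.injective.ne (by decide)
  · exact f.injective.ne (by decide)
  · exact (hf 0 1).not.2 (by decide)
  · exact (hf 2 1).not.2 (by decide)

/-- the set `A₆` of vertices outside `A` seeing all of `A` is a clique. -/
theorem A6_clique {V : Type} (G : SimpleGraph V)
    (hHole : HoleFree G) (hPara : ¬ HasInducedCopy G paraglider)
    (f : (cycleGraph 6)ᶜ ↪g G) :
    G.IsClique {v : V | v ∉ Set.range ⇑f ∧ ∀ i : Fin 6, G.Adj v (f i)} :=
  A6_clique_general G hPara f
end

section
/- Let G be a hole-free and diamond-free graph and A an induced subgraph of G isomorphic to the complement of C6. Then no vertex outside A is adjacent to all six vertices of A. -/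
open SimpleGraph

theorem hasInducedCopy_diamond_of_adj {V : Type} {G : SimpleGraph V} {u w x y : V}
    (hux : G.Adj u x) (huy : G.Adj u y) (huw : G.Adj u w)
    (hwx : G.Adj w x) (hwy : G.Adj w y) (hxy : ¬ G.Adj x y) (hne : x ≠ y) :
    HasInducedCopy G diamond := by
  refine ⟨⟨⟨![u, w, x, y], fun a b hab => ?_⟩, fun {a b} => ?_⟩⟩
  · fin_cases a <;> fin_cases b <;> simp_all [G.ne_of_adj, (G.ne_of_adj _).symm]
  · change G.Adj (![u, w, x, y] a) (![u, w, x, y] b) ↔ diamond.Adj a b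
    fin_cases a <;> fin_cases b <;> simp_all [diamond, G.adj_comm]

theorem hd_free_A6_empty_general {V : Type} (G : SimpleGraph V)
    (hDiam : ¬ HasInducedCopy G diamond)
    (f : (cycleGraph 6)ᶜ ↪g G) :
    ¬ ∃ v : V, v ∉ Set.range ⇑f ∧ ∀ i : Fin 6, G.Adj v (f i) := by
  rintro ⟨v, -, hv⟩
  -- `f 3` sees the non-adjacent `f 0` and `f 1`, so with `v` they span a diamond.
  refine hDiam (hasInducedCopy_diamond_of_adj (hv 0) (hv 1) (hv 3) ?_ ?_ ?_ (f.injective.ne (by decide)))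
  all_goals rw [f.map_adj_iff]; decide

/-- in a hole- and diamond-free graph, no vertex outside an induced
`C₆`-complement `A` sees all six vertices of `A`. -/
theorem hd_free_A6_empty {V : Type} (G : SimpleGraph V)
    (hHole : HoleFree G) (hDiam : ¬ HasInducedCopy G diamond)
    (f : (cycleGraph 6)ᶜ ↪g G) :
    ¬ ∃ v : V, v ∉ Set.range ⇑f ∧ ∀ i : Fin 6, G.Adj v (f i) :=
  hd_free_A6_empty_general G hDiam f
end

section
/- Let G be a hole-free and paraglider-free graph and A an induced subgraph of G isomorphic to the complement of C6. If x, y are adjacent vertices outside A, each having exactly two neighbors in A, then N_A(x) ∪ N_A(y) is a clique in G. -/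
open SimpleGraph

/-!
Index `A` as `f 0, …, f 5`, so that `f i` and `f j` are adjacent exactly when `i` and `j` are
distinct and not consecutive mod 6; it suffices that no two consecutive indices `i, i + 1` lie in
`N_A(x) ∪ N_A(y)`, and after a rotation they are `0, 1`. A vertex seeing both `f 0` and `f 1`
also sees `f 2` or `f 5` (else `z, f 0, f 2, f 5, f 1` is a 5-hole), one neighbour too many.
If `x` sees `f 0` and `y` sees `f 1`, then `f 3` and `f 4`, both adjacent to `f 0` and `f 1`,
must each be seen by `x` or `y` (else `x, f 0, f 3, f 1, y` or `x, f 0, f 4, f 1, y` is a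
5-hole). This forces `N_A(x), N_A(y)` to be `{0, 3}, {1, 4}` or `{0, 4}, {1, 3}`, and these
give the 6-holes `x, f 3, f 5, f 2, f 4, y` and `y, f 1, f 5, f 2, f 0, x`.
-/

lemma hasInducedCopy_of_adj_iff {V W : Type} {G : SimpleGraph V} {H : SimpleGraph W}
    (hH : ∀ i j, (∀ k, H.Adj k i ↔ H.Adj k j) → i = j) (v : W → V)
    (hv : ∀ i j, G.Adj (v i) (v j) ↔ H.Adj i j) : HasInducedCopy G H :=
  ⟨⟨⟨v, fun i j hij => hH i j fun k => by rw [← hv, ← hv, hij]⟩, hv _ _⟩⟩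

theorem Set.notMem_of_ncard_eq_two {α : Type*} {s : Set α} (hs : s.ncard = 2) {a b c : α}
    (ha : a ∈ s) (hb : b ∈ s) (hab : a ≠ b) (hca : c ≠ a) (hcb : c ≠ b) : c ∉ s := by
  obtain ⟨u, v, -, rfl⟩ := Set.ncard_eq_two.mp hs
  simp only [Set.mem_insert_iff, Set.mem_singleton_iff] at ha hb ⊢
  grind

namespace SimpleGraph

theorem IsClique.image_embedding {V W : Type*} {G : SimpleGraph V} {H : SimpleGraph W}
    {s : Set W} (hs : H.IsClique s) (f : H ↪g G) : G.IsClique (f '' s) := by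
  rintro _ ⟨i, hi, rfl⟩ _ ⟨j, hj, rfl⟩ hne
  exact f.map_adj_iff.mpr (hs hi hj (ne_of_apply_ne f hne))

theorem isClique_compl_cycleGraph_iff {n : ℕ} {s : Set (Fin (n + 2))} :
    (cycleGraph (n + 2))ᶜ.IsClique s ↔ ∀ i ∈ s, i + 1 ∉ s := by
  refine ⟨fun h i hi hi1 => ?_, fun h u hu v hv huv => ⟨huv, ?_⟩⟩
  · exact (h hi hi1 (by simp)).2 (by simp [cycleGraph_adj])
  · rw [cycleGraph_adj, sub_eq_iff_eq_add', sub_eq_iff_eq_add']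
    rintro (rfl | rfl)
    · exact h v hv hu
    · exact h u hu hv

def complCycleGraphRotate {n : ℕ} [NeZero n] (i : Fin n) :
    (cycleGraph n)ᶜ ↪g (cycleGraph n)ᶜ where
  toFun := (i + ·)
  inj' := add_right_injective i
  map_rel_iff' := by simp [cycleGraph_adj', add_sub_add_left_eq_sub]

end SimpleGraph

namespace HoleFree

variable {V : Type} {G : SimpleGraph V}

theorem false_of_induced_cycle5 (hG : HoleFree G) {v₀ v₁ v₂ v₃ v₄ : V}
    (h01 : G.Adj v₀ v₁) (h12 : G.Adj v₁ v₂) (h23 : G.Adj v₂ v₃) (h34 : G.Adj v₃ v₄)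
    (h40 : G.Adj v₄ v₀) (n02 : ¬G.Adj v₀ v₂) (n03 : ¬G.Adj v₀ v₃) (n13 : ¬G.Adj v₁ v₃)
    (n14 : ¬G.Adj v₁ v₄) (n24 : ¬G.Adj v₂ v₄) : False := by
  refine hG 5 le_rfl (hasInducedCopy_of_adj_iff (by decide) ![v₀, v₁, v₂, v₃, v₄] ?_)
  intro i j
  fin_cases i <;> fin_cases j <;> simp +decide [G.adj_comm, *, h40.symm]

theorem false_of_induced_cycle6 (hG : HoleFree G) {v₀ v₁ v₂ v₃ v₄ v₅ : V}
    (h01 : G.Adj v₀ v₁) (h12 : G.Adj v₁ v₂) (h23 : G.Adj v₂ v₃) (h34 : G.Adj v₃ v₄)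
    (h45 : G.Adj v₄ v₅) (h50 : G.Adj v₅ v₀)
    (n02 : ¬G.Adj v₀ v₂) (n03 : ¬G.Adj v₀ v₃) (n04 : ¬G.Adj v₀ v₄)
    (n13 : ¬G.Adj v₁ v₃) (n14 : ¬G.Adj v₁ v₄) (n15 : ¬G.Adj v₁ v₅)
    (n24 : ¬G.Adj v₂ v₄) (n25 : ¬G.Adj v₂ v₅) (n35 : ¬G.Adj v₃ v₅) : False := by
  refine hG 6 (by norm_num) (hasInducedCopy_of_adj_iff (by decide) ![v₀, v₁, v₂, v₃, v₄, v₅] ?_)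
  intro i j
  fin_cases i <;> fin_cases j <;> simp +decide [G.adj_comm, *, h50.symm]

theorem not_adj_zero_and_one (hG : HoleFree G) (f : (cycleGraph 6)ᶜ ↪g G) {z : V}
    (hz : {k | G.Adj z (f k)}.ncard = 2) : ¬(G.Adj z (f 0) ∧ G.Adj z (f 1)) := by
  rintro ⟨h0, h1⟩
  have adj : ∀ {i j}, (cycleGraph 6)ᶜ.Adj i j → G.Adj (f i) (f j) := f.map_adj_iff.mpr
  have nonadj : ∀ {i j}, ¬(cycleGraph 6)ᶜ.Adj i j → ¬G.Adj (f i) (f j) := mt f.map_adj_iff.mp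
  have h25 : G.Adj z (f 2) ∨ G.Adj z (f 5) := by
    by_contra! h
    exact hG.false_of_induced_cycle5 h0 (adj (by decide)) (adj (by decide)) (adj (by decide))
      h1.symm h.1 h.2 (nonadj (by decide)) (nonadj (by decide)) (nonadj (by decide))
  rcases h25 with h | h <;>
    exact Set.notMem_of_ncard_eq_two hz h0 h1 (by decide) (by decide) (by decide) h

theorem not_adj_zero_and_adj_one (hG : HoleFree G) (f : (cycleGraph 6)ᶜ ↪g G) {x y : V}
    (hxy : G.Adj x y) (hx : {k | G.Adj x (f k)}.ncard = 2)
    (hy : {k | G.Adj y (f k)}.ncard = 2) : ¬(G.Adj x (f 0) ∧ G.Adj y (f 1)) := by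
  rintro ⟨hx0, hy1⟩
  have adj : ∀ {i j}, (cycleGraph 6)ᶜ.Adj i j → G.Adj (f i) (f j) := f.map_adj_iff.mpr
  have nonadj : ∀ {i j}, ¬(cycleGraph 6)ᶜ.Adj i j → ¬G.Adj (f i) (f j) := mt f.map_adj_iff.mp
  have hx1 : ¬G.Adj x (f 1) := fun h => hG.not_adj_zero_and_one f hx ⟨hx0, h⟩
  have hy0 : ¬G.Adj y (f 0) := fun h => hG.not_adj_zero_and_one f hy ⟨h, hy1⟩
  have h3 : G.Adj x (f 3) ∨ G.Adj y (f 3) := by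
    by_contra! h
    exact hG.false_of_induced_cycle5 hx0 (adj (by decide)) (adj (by decide)) hy1.symm hxy.symm
      h.1 hx1 (nonadj (by decide)) (hy0 ·.symm) (h.2 ·.symm)
  have h4 : G.Adj x (f 4) ∨ G.Adj y (f 4) := by
    by_contra! h
    exact hG.false_of_induced_cycle5 hx0 (adj (by decide)) (adj (by decide)) hy1.symm hxy.symm
      h.1 hx1 (nonadj (by decide)) (hy0 ·.symm) (h.2 ·.symm)
  rcases h3 with hx3 | hy3 <;> rcases h4 with hx4 | hy4
  · exact Set.notMem_of_ncard_eq_two hx hx0 hx3 (by decide) (by decide) (by decide) hx4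
  · have nx : ∀ k, k ≠ 0 ∧ k ≠ 3 → ¬G.Adj x (f k) := fun _ h =>
      Set.notMem_of_ncard_eq_two hx hx0 hx3 (by decide) h.1 h.2
    have ny : ∀ k, k ≠ 1 ∧ k ≠ 4 → ¬G.Adj y (f k) := fun _ h =>
      Set.notMem_of_ncard_eq_two hy hy1 hy4 (by decide) h.1 h.2
    exact hG.false_of_induced_cycle6 hx3 (adj (by decide)) (adj (by decide)) (adj (by decide))
      hy4.symm hxy.symm (nx 5 (by decide)) (nx 2 (by decide)) (nx 4 (by decide))
      (nonadj (by decide)) (nonadj (by decide)) (ny 3 (by decide) ·.symm) (nonadj (by decide))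
      (ny 5 (by decide) ·.symm) (ny 2 (by decide) ·.symm)
  · have nx : ∀ k, k ≠ 0 ∧ k ≠ 4 → ¬G.Adj x (f k) := fun _ h =>
      Set.notMem_of_ncard_eq_two hx hx0 hx4 (by decide) h.1 h.2
    have ny : ∀ k, k ≠ 1 ∧ k ≠ 3 → ¬G.Adj y (f k) := fun _ h =>
      Set.notMem_of_ncard_eq_two hy hy1 hy3 (by decide) h.1 h.2
    exact hG.false_of_induced_cycle6 hy1 (adj (by decide)) (adj (by decide)) (adj (by decide))
      hx0.symm hxy (ny 5 (by decide)) (ny 2 (by decide)) hy0 (nonadj (by decide))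
      (nonadj (by decide)) (nx 1 (by decide) ·.symm) (nonadj (by decide))
      (nx 5 (by decide) ·.symm) (nx 2 (by decide) ·.symm)
  · exact Set.notMem_of_ncard_eq_two hy hy1 hy3 (by decide) (by decide) (by decide) hy4

end HoleFree

theorem A2_union_clique_general {V : Type} (G : SimpleGraph V)
    (hHole : HoleFree G)
    (f : (cycleGraph 6)ᶜ ↪g G)
    (x y : V) (hxy : G.Adj x y)
    (h2x : {i : Fin 6 | G.Adj x (f i)}.ncard = 2)
    (h2y : {i : Fin 6 | G.Adj y (f i)}.ncard = 2) :
    G.IsClique (⇑f '' {i : Fin 6 | G.Adj x (f i)} ∪ ⇑f '' {i : Fin 6 | G.Adj y (f i)}) := by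
  rw [← Set.image_union]
  refine IsClique.image_embedding (isClique_compl_cycleGraph_iff.mpr fun i hi hi1 => ?_) f
  set g := f.comp (complCycleGraphRotate i)
  have hg : ∀ z, {k | G.Adj z (g k)}.ncard = {k | G.Adj z (f k)}.ncard := fun z =>
    Set.ncard_preimage_of_injective_subset_range (s := {k | G.Adj z (f k)})
      (add_right_injective i) fun k _ => ⟨k - i, add_sub_cancel i k⟩
  have hg0 : g 0 = f i := congrArg f (add_zero i)
  have hg1 : g 1 = f (i + 1) := rfl
  rcases hi with hxi | hyi <;> rcases hi1 with hx1 | hy1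
  · exact hHole.not_adj_zero_and_one g ((hg x).trans h2x) ⟨hg0 ▸ hxi, hg1 ▸ hx1⟩
  · exact hHole.not_adj_zero_and_adj_one g hxy ((hg x).trans h2x) ((hg y).trans h2y)
      ⟨hg0 ▸ hxi, hg1 ▸ hy1⟩
  · exact hHole.not_adj_zero_and_adj_one g hxy.symm ((hg y).trans h2y) ((hg x).trans h2x)
      ⟨hg0 ▸ hyi, hg1 ▸ hx1⟩
  · exact hHole.not_adj_zero_and_one g ((hg y).trans h2y) ⟨hg0 ▸ hyi, hg1 ▸ hy1⟩

/-- for adjacent `x, y ∈ A₂`, `N_A(x) ∪ N_A(y)` is a clique. -/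
theorem A2_union_clique {V : Type} (G : SimpleGraph V)
    (hHole : HoleFree G) (hPara : ¬ HasInducedCopy G paraglider)
    (f : (cycleGraph 6)ᶜ ↪g G)
    (x y : V) (hx : x ∉ Set.range ⇑f) (hy : y ∉ Set.range ⇑f) (hxy : G.Adj x y)
    (h2x : {i : Fin 6 | G.Adj x (f i)}.ncard = 2)
    (h2y : {i : Fin 6 | G.Adj y (f i)}.ncard = 2) :
    G.IsClique (⇑f '' {i : Fin 6 | G.Adj x (f i)} ∪ ⇑f '' {i : Fin 6 | G.Adj y (f i)}) :=
  A2_union_clique_general G hHole f x y hxy h2x h2y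
end

section
/- Let G be a hole-free and paraglider-free graph, A an induced copy of the complement of C6 in G, and D1 the set of vertices outside A with a neighbor in A. Let x, y ∈ D1 be nonadjacent endpoints of an induced path P in G all of whose internal vertices lie outside D1 ∪ V(A). Then P has exactly three vertices, and N_A(x) and N_A(y) are comparable under inclusion. -/
open SimpleGraph

private lemma mod_succ_iff {a b m : ℕ} (_ : a < m + 2) (hb : b < m + 2) :
    a = (1 + b) % (m + 2) ↔ (b + 1 = a ∨ (b = m + 1 ∧ a = 0)) := by
  by_cases h : b = m + 1
  · subst h
    rw [show 1 + (m+1) = m+2 by omega, Nat.mod_self]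
    omega
  · rw [Nat.mod_eq_of_lt (by omega)]
    omega

private lemma cyc_adj {m : ℕ} (hm : 2 ≤ m) (i j : Fin m) :
    (cycleGraph m).Adj i j ↔
      (i.val + 1 = j.val ∨ j.val + 1 = i.val ∨
       (i.val = m - 1 ∧ j.val = 0) ∨ (j.val = m - 1 ∧ i.val = 0)) := by
  obtain ⟨m, rfl⟩ : ∃ m', m = m' + 2 := ⟨m - 2, by omega⟩
  rw [cycleGraph_adj, sub_eq_iff_eq_add, sub_eq_iff_eq_add, Fin.ext_iff, Fin.ext_iff,
    Fin.val_add, Fin.val_add, Fin.val_one, mod_succ_iff i.isLt j.isLt,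
    mod_succ_iff j.isLt i.isLt]
  have := i.isLt; have := j.isLt
  omega

private lemma buildHole {V : Type} {G : SimpleGraph V} {n k : ℕ} (hn : 2 ≤ n) (hk : 1 ≤ k)
    (p : Fin (n + 1) → V) (e : Fin k → V)
    (hpadj : ∀ i j, G.Adj (p i) (p j) ↔ (i.val + 1 = j.val ∨ j.val + 1 = i.val))
    (hpinj : Function.Injective p)
    (heinj : Function.Injective e)
    (hpe : ∀ i t, p i ≠ e t)
    (headj : ∀ s t : Fin k, G.Adj (e s) (e t) ↔ (s.val + 1 = t.val ∨ t.val + 1 = s.val))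
    (hcross : ∀ i t, G.Adj (p i) (e t) ↔
      ((i.val = n ∧ t.val = 0) ∨ (i.val = 0 ∧ t.val = k - 1))) :
    HasInducedCopy G (cycleGraph (n + 1 + k)) := by
  have hm2 : 2 ≤ n + 1 + k := by omega
  let q : Fin (n + 1 + k) → V := fun i =>
    if h : i.val < n + 1 then p ⟨i.val, h⟩ else e ⟨i.val - (n + 1), by omega⟩
  have hqinj : Function.Injective q := by
    intro i j hij
    have hi := i.isLt; have hj := j.isLt
    by_cases h1 : i.val < n + 1 <;> by_cases h2 : j.val < n + 1 <;>
      simp only [q, dif_pos, dif_neg, h1, h2, dite_true, dite_false] at hij <;>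
      [skip; exact absurd hij (hpe _ _); exact absurd hij.symm (hpe _ _); skip]
    · have := hpinj hij
      simp only [Fin.mk.injEq] at this
      exact Fin.ext this
    · have := heinj hij
      simp only [Fin.mk.injEq] at this
      exact Fin.ext (by omega)
  have key : ∀ i j : Fin (n + 1 + k), G.Adj (q i) (q j) ↔ (cycleGraph (n + 1 + k)).Adj i j := by
    intro i j
    have hi := i.isLt; have hj := j.isLt
    rw [cyc_adj hm2]
    by_cases h1 : i.val < n + 1 <;> by_cases h2 : j.val < n + 1 <;>
      simp only [q, dif_pos, dif_neg, h1, h2, dite_true, dite_false]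
    · rw [hpadj]; simp only []; omega
    · rw [hcross]; simp only []; omega
    · rw [G.adj_comm, hcross]; simp only []; omega
    · rw [headj]; simp only []; omega
  exact ⟨⟨⟨q, hqinj⟩, fun {a b} => key a b⟩⟩

private lemma mk_paraglider {V : Type} {G : SimpleGraph V} (f : (cycleGraph 6)ᶜ ↪g G)
    (x y : V) (hx : x ∉ Set.range ⇑f) (hy : y ∉ Set.range ⇑f)
    (a c d : Fin 6)
    (hxa : G.Adj x (f a)) (hya : ¬ G.Adj y (f a))
    (hxc : G.Adj x (f c)) (hyc : G.Adj y (f c))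
    (hxd : G.Adj x (f d)) (hyd : G.Adj y (f d))
    (hac : ((cycleGraph 6)ᶜ).Adj a c) (had : ((cycleGraph 6)ᶜ).Adj a d)
    (hcd : ¬((cycleGraph 6)ᶜ).Adj c d) (hcdne : c ≠ d)
    (hnadj : ¬ G.Adj x y) (hne : x ≠ y) :
    HasInducedCopy G paraglider := by
  have hC6 : ∀ a b : Fin 6, G.Adj (f a) (f b) ↔ ((cycleGraph 6)ᶜ).Adj a b :=
    fun a b => f.map_adj_iff
  have hfx : ∀ u : Fin 6, f u ≠ x := fun u h => hx (Set.mem_range.mpr ⟨u, h⟩)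
  have hfy : ∀ u : Fin 6, f u ≠ y := fun u h => hy (Set.mem_range.mpr ⟨u, h⟩)
  have hfne : ∀ u v : Fin 6, u ≠ v → f u ≠ f v := fun u v h e => h (f.injective e)
  have h12 : f a ≠ f c := hfne _ _ hac.ne
  have h13 : f a ≠ f d := hfne _ _ had.ne
  have h23 : f c ≠ f d := hfne _ _ hcdne
  have hpg : ∀ i j : Fin 5, paraglider.Adj i j ↔
      (i, j) ∈ ([(0,1),(1,0),(0,2),(2,0),(0,3),(3,0),(1,2),(2,1),(1,3),(3,1),
        (4,2),(2,4),(4,3),(3,4)] : List (Fin 5 × Fin 5)) := by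
    intro i j
    unfold paraglider
    rw [SimpleGraph.fromRel_adj]
    fin_cases i <;> fin_cases j <;> decide
  refine ⟨⟨⟨![x, f a, f c, f d, y], ?_⟩, ?_⟩⟩
  · intro i j hij
    fin_cases i <;> fin_cases j <;>
      first
        | rfl
        | (exact absurd hij hne)
        | (exact absurd hij.symm hne)
        | (exact absurd hij.symm (hfx _))
        | (exact absurd hij (hfx _))
        | (exact absurd hij.symm (hfy _))
        | (exact absurd hij (hfy _))
        | (exact absurd hij h12)
        | (exact absurd hij.symm h12)
        | (exact absurd hij h13)
        | (exact absurd hij.symm h13)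
        | (exact absurd hij h23)
        | (exact absurd hij.symm h23)
  · intro i j
    fin_cases i <;> fin_cases j <;> rw [hpg]
    · exact iff_of_false (fun h => G.irrefl h) (by decide)
    · exact iff_of_true hxa (by decide)
    · exact iff_of_true hxc (by decide)
    · exact iff_of_true hxd (by decide)
    · exact iff_of_false hnadj (by decide)
    · exact iff_of_true hxa.symm (by decide)
    · exact iff_of_false (fun h => G.irrefl h) (by decide)
    · exact iff_of_true ((hC6 _ _).mpr hac) (by decide)
    · exact iff_of_true ((hC6 _ _).mpr had) (by decide)
    · exact iff_of_false (fun h => hya h.symm) (by decide)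
    · exact iff_of_true hxc.symm (by decide)
    · exact iff_of_true ((hC6 _ _).mpr hac.symm) (by decide)
    · exact iff_of_false (fun h => G.irrefl h) (by decide)
    · exact iff_of_false (fun h => hcd ((hC6 _ _).mp h)) (by decide)
    · exact iff_of_true hyc.symm (by decide)
    · exact iff_of_true hxd.symm (by decide)
    · exact iff_of_true ((hC6 _ _).mpr had.symm) (by decide)
    · exact iff_of_false (fun h => hcd (((hC6 _ _).mp h).symm)) (by decide)
    · exact iff_of_false (fun h => G.irrefl h) (by decide)
    · exact iff_of_true hyd.symm (by decide)
    · exact iff_of_false (fun h => hnadj h.symm) (by decide)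
    · exact iff_of_false hya (by decide)
    · exact iff_of_true hyc (by decide)
    · exact iff_of_true hyd (by decide)
    · exact iff_of_false (fun h => G.irrefl h) (by decide)

/-- an induced path between nonadjacent `x, y ∈ D₁` whose internal vertices
avoid `D₁ ∪ V(A)` has exactly three vertices, and `N_A(x)`, `N_A(y)` are comparable. -/
theorem D1_path_three_vertices {V : Type} (G : SimpleGraph V)
    (hHole : HoleFree G) (hPara : ¬ HasInducedCopy G paraglider)
    (f : (cycleGraph 6)ᶜ ↪g G)
    (x y : V) (hx : x ∉ Set.range ⇑f) (hy : y ∉ Set.range ⇑f)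
    (hxA : ∃ i : Fin 6, G.Adj x (f i)) (hyA : ∃ i : Fin 6, G.Adj y (f i))
    (hnadj : ¬ G.Adj x y) (hne : x ≠ y)
    (n : ℕ) (hn : 1 ≤ n) (p : Fin (n + 1) → V) (hinj : Function.Injective p)
    (h0 : p 0 = x) (hlast : p (Fin.last n) = y)
    (hind : ∀ i j : Fin (n + 1), G.Adj (p i) (p j) ↔ (i.val + 1 = j.val ∨ j.val + 1 = i.val))
    (hint : ∀ i : Fin (n + 1), i ≠ 0 → i ≠ Fin.last n →
      p i ∉ Set.range ⇑f ∧ ¬ ∃ j : Fin 6, G.Adj (p i) (f j)) :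
    n = 2 ∧ ({i : Fin 6 | G.Adj x (f i)} ⊆ {i : Fin 6 | G.Adj y (f i)} ∨
      {i : Fin 6 | G.Adj y (f i)} ⊆ {i : Fin 6 | G.Adj x (f i)}) := by
  have hC6 : ∀ a b : Fin 6, G.Adj (f a) (f b) ↔ ((cycleGraph 6)ᶜ).Adj a b :=
    fun a b => f.map_adj_iff
  have hfr : ∀ (v : V) (u : Fin 6), v ∉ Set.range ⇑f → f u ≠ v :=
    fun v u hv h => hv (Set.mem_range.mpr ⟨u, h⟩)
  -- n ≥ 2
  have hn2 : 2 ≤ n := by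
    by_contra h
    have hn1 : n = 1 := by omega
    subst hn1
    have : G.Adj (p 0) (p (Fin.last 1)) := (hind 0 (Fin.last 1)).2 (Or.inl rfl)
    rw [h0, hlast] at this
    exact hnadj this
  -- path vertices avoid A
  have hpf : ∀ i : Fin (n + 1), p i ∉ Set.range ⇑f := by
    intro i
    by_cases hi0 : i = 0
    · rw [hi0, h0]; exact hx
    by_cases hil : i = Fin.last n
    · rw [hil, hlast]; exact hy
    exact (hint i hi0 hil).1
  have hintadj : ∀ i : Fin (n + 1), i ≠ 0 → i ≠ Fin.last n → ∀ j, ¬ G.Adj (p i) (f j) := by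
    intro i h1 h2 j hadj
    exact (hint i h1 h2).2 ⟨j, hadj⟩
  have hpe : ∀ (i : Fin (n + 1)) (t : Fin 6), p i ≠ f t :=
    fun i t h => hpf i (Set.mem_range.mpr ⟨t, h.symm⟩)
  -- adjacency of path vertices to A
  have hcrossGen : ∀ (i : Fin (n + 1)) (a : Fin 6), G.Adj (p i) (f a) ↔
      ((i.val = 0 ∧ G.Adj x (f a)) ∨ (i.val = n ∧ G.Adj y (f a))) := by
    intro i a
    constructor
    · intro h
      by_cases hi0 : i = 0
      · exact Or.inl ⟨by rw [hi0]; rfl, by rwa [hi0, h0] at h⟩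
      by_cases hil : i = Fin.last n
      · exact Or.inr ⟨by rw [hil]; rfl, by rwa [hil, hlast] at h⟩
      · exact absurd h (hintadj i hi0 hil a)
    · rintro (⟨h1, h2⟩ | ⟨h1, h2⟩)
      · have : i = 0 := Fin.ext h1
        rw [this, h0]; exact h2
      · have : i = Fin.last n := Fin.ext h1
        rw [this, hlast]; exact h2
  -- Claim A : no adjacent "private" pair
  have claimA : ∀ a b : Fin 6, G.Adj x (f a) → ¬ G.Adj y (f a) →
      G.Adj y (f b) → ¬ G.Adj x (f b) → ((cycleGraph 6)ᶜ).Adj a b → False := by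
    intro a b hxa hya hyb hxb hab
    refine hHole (n + 1 + 2) (by omega) (buildHole hn2 (by omega) p ![f b, f a] hind hinj
      ?_ ?_ ?_ ?_)
    · intro s t hst
      fin_cases s <;> fin_cases t <;>
        first
          | rfl
          | (exact absurd (f.injective hst) hab.ne')
          | (exact absurd (f.injective hst) hab.ne)
    · intro i t
      fin_cases t <;> exact hpe i _
    · intro s t
      fin_cases s <;> fin_cases t
      · exact iff_of_false (fun h => G.irrefl h) (by decide)
      · exact iff_of_true ((hC6 _ _).mpr hab.symm) (by decide)
      · exact iff_of_true ((hC6 _ _).mpr hab) (by decide)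
      · exact iff_of_false (fun h => G.irrefl h) (by decide)
    · intro i t
      fin_cases t
      · refine (hcrossGen i b).trans ?_
        constructor
        · rintro (⟨h1, h2⟩ | ⟨h1, h2⟩)
          · exact absurd h2 hxb
          · exact Or.inl ⟨h1, rfl⟩
        · rintro (⟨h1, _⟩ | ⟨_, h2⟩)
          · exact Or.inr ⟨h1, hyb⟩
          · exact absurd h2 (by decide)
      · refine (hcrossGen i a).trans ?_
        constructor
        · rintro (⟨h1, h2⟩ | ⟨h1, h2⟩)
          · exact Or.inr ⟨h1, rfl⟩
          · exact absurd h2 hya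
        · rintro (⟨_, h2⟩ | ⟨h1, _⟩)
          · exact absurd h2 (by decide)
          · exact Or.inl ⟨h1, hxa⟩
  -- Claim B : no nonadjacent private pair with a common neighbor outside N(x) ∪ N(y)
  have claimB : ∀ a b c : Fin 6, G.Adj x (f a) → ¬ G.Adj y (f a) →
      G.Adj y (f b) → ¬ G.Adj x (f b) → ¬ G.Adj x (f c) → ¬ G.Adj y (f c) →
      ((cycleGraph 6)ᶜ).Adj a c → ((cycleGraph 6)ᶜ).Adj b c →
      ¬ ((cycleGraph 6)ᶜ).Adj a b → False := by
    intro a b c hxa hya hyb hxb hxc hyc hac hbc hab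
    have hne_ab : a ≠ b := fun h => hya (h ▸ hyb)
    refine hHole (n + 1 + 3) (by omega) (buildHole hn2 (by omega) p ![f b, f c, f a] hind hinj
      ?_ ?_ ?_ ?_)
    · intro s t hst
      fin_cases s <;> fin_cases t <;>
        first
          | rfl
          | (exact absurd (f.injective hst) hbc.ne)
          | (exact absurd (f.injective hst) hbc.ne')
          | (exact absurd (f.injective hst) hac.ne)
          | (exact absurd (f.injective hst) hac.ne')
          | (exact absurd (f.injective hst) hne_ab)
          | (exact absurd (f.injective hst).symm hne_ab)
    · intro i t
      fin_cases t <;> exact hpe i _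
    · intro s t
      fin_cases s <;> fin_cases t
      · exact iff_of_false (fun h => G.irrefl h) (by decide)
      · exact iff_of_true ((hC6 _ _).mpr hbc) (by decide)
      · exact iff_of_false (fun h => hab (((hC6 _ _).mp h).symm)) (by decide)
      · exact iff_of_true ((hC6 _ _).mpr hbc.symm) (by decide)
      · exact iff_of_false (fun h => G.irrefl h) (by decide)
      · exact iff_of_true ((hC6 _ _).mpr hac.symm) (by decide)
      · exact iff_of_false (fun h => hab ((hC6 _ _).mp h)) (by decide)
      · exact iff_of_true ((hC6 _ _).mpr hac) (by decide)
      · exact iff_of_false (fun h => G.irrefl h) (by decide)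
    · intro i t
      fin_cases t
      · refine (hcrossGen i b).trans ?_
        constructor
        · rintro (⟨h1, h2⟩ | ⟨h1, h2⟩)
          · exact absurd h2 hxb
          · exact Or.inl ⟨h1, rfl⟩
        · rintro (⟨h1, _⟩ | ⟨_, h2⟩)
          · exact Or.inr ⟨h1, hyb⟩
          · exact absurd h2 (by decide)
      · refine (hcrossGen i c).trans ?_
        constructor
        · rintro (⟨_, h2⟩ | ⟨_, h2⟩)
          · exact absurd h2 hxc
          · exact absurd h2 hyc
        · rintro (⟨_, h2⟩ | ⟨_, h2⟩) <;> exact absurd h2 (by decide)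
      · refine (hcrossGen i a).trans ?_
        constructor
        · rintro (⟨h1, h2⟩ | ⟨h1, h2⟩)
          · exact Or.inr ⟨h1, rfl⟩
          · exact absurd h2 hya
        · rintro (⟨_, h2⟩ | ⟨h1, _⟩)
          · exact absurd h2 (by decide)
          · exact Or.inl ⟨h1, hxa⟩
  -- Claim C : if n ≥ 3, no common neighbor of x and y in A
  have claimC : 3 ≤ n → ∀ a : Fin 6, G.Adj x (f a) → G.Adj y (f a) → False := by
    intro hn3 a hxa hya
    refine hHole (n + 1 + 1) (by omega) (buildHole hn2 (by omega) p ![f a] hind hinj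
      ?_ ?_ ?_ ?_)
    · intro s t _
      fin_cases s <;> fin_cases t <;> rfl
    · intro i t
      fin_cases t <;> exact hpe i _
    · intro s t
      fin_cases s <;> fin_cases t
      exact iff_of_false (fun h => G.irrefl h) (by decide)
    · intro i t
      fin_cases t
      refine (hcrossGen i a).trans ?_
      constructor
      · rintro (⟨h1, h2⟩ | ⟨h1, h2⟩)
        · exact Or.inr ⟨h1, rfl⟩
        · exact Or.inl ⟨h1, rfl⟩
      · rintro (⟨h1, _⟩ | ⟨h1, _⟩)
        · exact Or.inr ⟨h1, hya⟩
        · exact Or.inl ⟨h1, hxa⟩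
  -- the key Fin 6 fact
  have key6 : ∀ a b : Fin 6, a ≠ b → ¬((cycleGraph 6)ᶜ).Adj a b →
      ∃ c d : Fin 6, ((cycleGraph 6)ᶜ).Adj a c ∧ ((cycleGraph 6)ᶜ).Adj b c ∧
        ((cycleGraph 6)ᶜ).Adj a d ∧ ((cycleGraph 6)ᶜ).Adj b d ∧
        ¬((cycleGraph 6)ᶜ).Adj c d ∧ c ≠ d := by decide
  -- comparability
  have comp : ({i : Fin 6 | G.Adj x (f i)} ⊆ {i : Fin 6 | G.Adj y (f i)} ∨
      {i : Fin 6 | G.Adj y (f i)} ⊆ {i : Fin 6 | G.Adj x (f i)}) := by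
    by_contra hcon
    push_neg at hcon
    obtain ⟨h1, h2⟩ := hcon
    obtain ⟨a, hxa, hya⟩ := Set.not_subset.mp h1
    obtain ⟨b, hyb, hxb⟩ := Set.not_subset.mp h2
    simp only [Set.mem_setOf_eq] at hxa hya hyb hxb
    have hne_ab : a ≠ b := fun h => hya (h ▸ hyb)
    by_cases hadj : ((cycleGraph 6)ᶜ).Adj a b
    · exact claimA a b hxa hya hyb hxb hadj
    obtain ⟨c, d, hac, hbc, had, hbd, hcd, hcdne⟩ := key6 a b hne_ab hadj
    have hc : G.Adj x (f c) ∧ G.Adj y (f c) := by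
      by_cases hx1 : G.Adj x (f c) <;> by_cases hy1 : G.Adj y (f c)
      · exact ⟨hx1, hy1⟩
      · exact absurd (claimA c b hx1 hy1 hyb hxb hbc.symm) not_false
      · exact absurd (claimA a c hxa hya hy1 hx1 hac) not_false
      · exact absurd (claimB a b c hxa hya hyb hxb hx1 hy1 hac hbc hadj) not_false
    have hd : G.Adj x (f d) ∧ G.Adj y (f d) := by
      by_cases hx1 : G.Adj x (f d) <;> by_cases hy1 : G.Adj y (f d)
      · exact ⟨hx1, hy1⟩
      · exact absurd (claimA d b hx1 hy1 hyb hxb hbd.symm) not_false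
      · exact absurd (claimA a d hxa hya hy1 hx1 had) not_false
      · exact absurd (claimB a b d hxa hya hyb hxb hx1 hy1 had hbd hadj) not_false
    exact hPara (mk_paraglider f x y hx hy a c d hxa hya hc.1 hc.2 hd.1 hd.2
      hac had hcd hcdne hnadj hne)
  refine ⟨?_, comp⟩
  by_contra hne2
  have hn3 : 3 ≤ n := by omega
  obtain ⟨a, hxa⟩ := hxA
  obtain ⟨b, hyb⟩ := hyA
  rcases comp with h | h
  · exact claimC hn3 a hxa (h hxa)
  · exact claimC hn3 b (h hyb) hyb
end
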